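/- arXiv:2505.10916 — 2 statements merged into one kernel-verified Lean document; each statement's English description precedes it below -/
import Mathlib

section
/- For f ∈ C¹([-a,a]), the L²-norm of the derivative of V[f] on (-a,a) satisfies ‖∂ₓ V[f]‖_{L²(-a,a)} ≤ (1/√2) ‖f'‖_{L²(-a,a)}. -/
/-!
Differentiating under the integral, `∂ₓV[f](x) = ∫₀¹ σ f'(σx) dσ`. Cauchy–Schwarz for the weight
`σ dσ`, of total mass `1/2`, gives `|∂ₓV[f](x)|² ≤ ½ ∫₀¹ σ |f'(σx)|² dσ`. Integrating over `x`
and swapping the integrals, the substitution `u = σx` turns `∫ σ |f'(σx)|² dx` over `(-a, a)`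
into the integral of `|f'|²` over `(-σa, σa) ⊆ (-a, a)`.
-/

open MeasureTheory intervalIntegral Set Metric

lemma sq_integral_mul_le_half_integral_mul_sq {h : ℝ → ℝ} (hh : Continuous h) :
    (∫ σ in (0:ℝ)..1, σ * h σ) ^ 2 ≤ 1 / 2 * ∫ σ in (0:ℝ)..1, σ * h σ ^ 2 := by
  set I := ∫ σ in (0:ℝ)..1, σ * h σ
  -- expand `0 ≤ ∫ σ (h σ - 2 I)²`
  have hnonneg : 0 ≤ ∫ σ in (0:ℝ)..1, σ * (h σ - 2 * I) ^ 2 :=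
    integral_nonneg zero_le_one fun σ hσ => mul_nonneg hσ.1 (sq_nonneg _)
  have i1 : IntervalIntegrable (fun σ => σ * h σ ^ 2) volume 0 1 := by
    apply Continuous.intervalIntegrable; fun_prop
  have i2 : IntervalIntegrable (fun σ => 4 * I * (σ * h σ)) volume 0 1 := by
    apply Continuous.intervalIntegrable; fun_prop
  have i3 : IntervalIntegrable (fun σ : ℝ => 4 * I ^ 2 * σ) volume 0 1 := by
    apply Continuous.intervalIntegrable; fun_prop
  have hexpand : (fun σ => σ * (h σ - 2 * I) ^ 2)
      = fun σ => (σ * h σ ^ 2 - 4 * I * (σ * h σ)) + 4 * I ^ 2 * σ := by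
    funext σ; ring
  rw [hexpand, integral_add (i1.sub i2) i3, integral_sub i1 i2,
    intervalIntegral.integral_const_mul, intervalIntegral.integral_const_mul, integral_id]
    at hnonneg
  norm_num at hnonneg
  nlinarith

variable {E : Type*} [NormedAddCommGroup E] [NormedSpace ℝ E]

lemma norm_integral_smul_sq_le {h : ℝ → E} (hh : Continuous h) :
    ‖∫ σ in (0:ℝ)..1, σ • h σ‖ ^ 2 ≤ 1 / 2 * ∫ σ in (0:ℝ)..1, σ * ‖h σ‖ ^ 2 := by
  have hnorm : ‖∫ σ in (0:ℝ)..1, σ • h σ‖ ≤ ∫ σ in (0:ℝ)..1, σ * ‖h σ‖ :=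
    calc ‖∫ σ in (0:ℝ)..1, σ • h σ‖ ≤ ∫ σ in (0:ℝ)..1, ‖σ • h σ‖ :=
          norm_integral_le_integral_norm zero_le_one
      _ = ∫ σ in (0:ℝ)..1, σ * ‖h σ‖ := by
          refine integral_congr fun σ hσ => ?_
          rw [uIcc_of_le zero_le_one] at hσ
          simp only [norm_smul, Real.norm_of_nonneg hσ.1]
  calc ‖∫ σ in (0:ℝ)..1, σ • h σ‖ ^ 2 ≤ (∫ σ in (0:ℝ)..1, σ * ‖h σ‖) ^ 2 := by gcongr
    _ ≤ 1 / 2 * ∫ σ in (0:ℝ)..1, σ * ‖h σ‖ ^ 2 :=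
      sq_integral_mul_le_half_integral_mul_sq hh.norm

lemma integral_mul_comp_mul_le {φ : ℝ → ℝ} (hφ : Continuous φ) (hφ0 : ∀ x, 0 ≤ φ x)
    {b c σ : ℝ} (hb : b ≤ 0) (hc : 0 ≤ c) (hσ0 : 0 ≤ σ) (hσ1 : σ ≤ 1) :
    ∫ x in b..c, σ * φ (σ * x) ≤ ∫ x in b..c, φ x := by
  rcases hσ0.eq_or_lt with rfl | hσ
  · simpa using integral_nonneg (hb.trans hc) fun x _ => hφ0 x
  rw [intervalIntegral.integral_const_mul, integral_comp_mul_left φ hσ.ne', smul_eq_mul,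
    mul_inv_cancel_left₀ hσ.ne']
  exact integral_mono_interval (by nlinarith) (by nlinarith) (by nlinarith)
    (.of_forall hφ0) (hφ.intervalIntegrable _ _)

lemma integral_integral_mul_comp_mul_le {φ : ℝ → ℝ} (hφ : Continuous φ) (hφ0 : ∀ x, 0 ≤ φ x)
    {b c : ℝ} (hb : b ≤ 0) (hc : 0 ≤ c) :
    ∫ x in b..c, ∫ σ in (0:ℝ)..1, σ * φ (σ * x) ≤ ∫ x in b..c, φ x := by
  have hint : IntegrableOn (Function.uncurry fun x σ : ℝ => σ * φ (σ * x))
      (uIoc b c ×ˢ uIoc 0 1) := by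
    have hcont : Continuous (Function.uncurry fun x σ : ℝ => σ * φ (σ * x)) := by fun_prop
    exact (hcont.continuousOn.integrableOn_compact (isCompact_uIcc.prod isCompact_uIcc)).mono_set
      (prod_mono uIoc_subset_uIcc uIoc_subset_uIcc)
  rw [intervalIntegral_intervalIntegral_swap hint]
  calc ∫ σ in (0:ℝ)..1, ∫ x in b..c, σ * φ (σ * x)
      ≤ ∫ σ in (0:ℝ)..1, ∫ x in b..c, φ x := by
        refine integral_mono_on zero_le_one ?_ intervalIntegrable_const
          fun σ hσ => integral_mul_comp_mul_le hφ hφ0 hb hc hσ.1 hσ.2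
        apply Continuous.intervalIntegrable
        apply continuous_parametric_intervalIntegral_of_continuous'
        fun_prop
    _ = ∫ x in b..c, φ x := by simp

lemma integral_norm_sq_integral_smul_comp_mul_le {g : ℝ → E} (hg : Continuous g)
    {b c : ℝ} (hb : b ≤ 0) (hc : 0 ≤ c) :
    ∫ x in b..c, ‖∫ σ in (0:ℝ)..1, σ • g (σ * x)‖ ^ 2 ≤ 1 / 2 * ∫ x in b..c, ‖g x‖ ^ 2 := by
  calc ∫ x in b..c, ‖∫ σ in (0:ℝ)..1, σ • g (σ * x)‖ ^ 2
      ≤ ∫ x in b..c, 1 / 2 * ∫ σ in (0:ℝ)..1, σ * ‖g (σ * x)‖ ^ 2 := by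
        refine integral_mono_on (hb.trans hc) ?_ ?_
          fun x _ => norm_integral_smul_sq_le (by fun_prop)
        all_goals
          apply Continuous.intervalIntegrable
          fun_prop
    _ ≤ 1 / 2 * ∫ x in b..c, ‖g x‖ ^ 2 := by
        rw [intervalIntegral.integral_const_mul]
        gcongr
        exact integral_integral_mul_comp_mul_le (φ := fun u => ‖g u‖ ^ 2) (by fun_prop)
          (fun _ => by positivity) hb hc

lemma hasDerivAt_integral_comp_mul {f : ℝ → E} (hf : ContDiff ℝ 1 f) (x : ℝ) :
    HasDerivAt (fun y => ∫ σ in (0:ℝ)..1, f (σ * y)) (∫ σ in (0:ℝ)..1, σ • deriv f (σ * x)) x := by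
  have hf' : Continuous (deriv f) := hf.continuous_deriv le_rfl
  obtain ⟨M, hM⟩ := (isCompact_closedBall (0:ℝ) (|x| + 1)).exists_bound_of_continuousOn
    hf'.continuousOn
  have hbound : ∀ σ ∈ uIoc (0:ℝ) 1, ∀ y ∈ ball x 1, ‖σ • deriv f (σ * y)‖ ≤ M := by
    intro σ hσ y hy
    rw [uIoc_of_le zero_le_one] at hσ
    have hy' : |y| ≤ |x| + 1 := by
      have := abs_sub_abs_le_abs_sub y x
      rw [mem_ball, Real.dist_eq] at hy
      linarith
    have hσy : σ * y ∈ closedBall (0:ℝ) (|x| + 1) := by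
      rw [mem_closedBall_zero_iff, Real.norm_eq_abs, abs_mul, abs_of_pos hσ.1]
      exact (mul_le_of_le_one_left (abs_nonneg y) hσ.2).trans hy'
    rw [norm_smul, Real.norm_of_nonneg hσ.1.le]
    exact (mul_le_of_le_one_left (norm_nonneg _) hσ.2).trans (hM _ hσy)
  have hderiv : ∀ σ y, HasDerivAt (fun y => f (σ * y)) (σ • deriv f (σ * y)) y := fun σ y =>
    (hf.differentiable one_ne_zero _).hasDerivAt.scomp y
      (by simpa using (hasDerivAt_id y).const_mul σ)
  exact (hasDerivAt_integral_of_dominated_loc_of_deriv_le (ball_mem_nhds x one_pos)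
    (.of_forall fun y => (by fun_prop : Continuous fun σ => f (σ * y)).aestronglyMeasurable)
    ((by fun_prop : Continuous fun σ => f (σ * x)).intervalIntegrable _ _)
    ((by fun_prop : Continuous fun σ => σ • deriv f (σ * x))).aestronglyMeasurable
    (.of_forall hbound) intervalIntegrable_const
    (.of_forall fun σ _ y _ => hderiv σ y)).2

/-- For f ∈ C¹, ‖∂ₓ V[f]‖_{L²(-a,a)} ≤ (1/√2) ‖f'‖_{L²(-a,a)}. -/
theorem stmt_2 (a : ℝ) (ha : 0 < a) (f : ℝ → ℂ) (hf : ContDiff ℝ 1 f) :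
    Real.sqrt (∫ x in (-a)..a, ‖deriv (fun y : ℝ => ∫ σ in (0:ℝ)..1, f (σ * y)) x‖ ^ 2)
      ≤ (1 / Real.sqrt 2) * Real.sqrt (∫ x in (-a)..a, ‖deriv f x‖ ^ 2) := by
  have hV : ∀ x, deriv (fun y : ℝ => ∫ σ in (0:ℝ)..1, f (σ * y)) x
      = ∫ σ in (0:ℝ)..1, σ • deriv f (σ * x) := fun x =>
    (hasDerivAt_integral_comp_mul hf x).deriv
  simp_rw [hV]
  calc Real.sqrt (∫ x in (-a)..a, ‖∫ σ in (0:ℝ)..1, σ • deriv f (σ * x)‖ ^ 2)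
      ≤ Real.sqrt (1 / 2 * ∫ x in (-a)..a, ‖deriv f x‖ ^ 2) :=
        Real.sqrt_le_sqrt <| integral_norm_sq_integral_smul_comp_mul_le
          (hf.continuous_deriv le_rfl) (by linarith) ha.le
    _ = 1 / Real.sqrt 2 * Real.sqrt (∫ x in (-a)..a, ‖deriv f x‖ ^ 2) := by
        rw [Real.sqrt_mul (by norm_num), Real.sqrt_div' _ zero_le_two, Real.sqrt_one]
end

section
/- For f ∈ C²([-a,a]), the L²-norm of the second derivative of V[f] on (-a,a) satisfies ‖∂ₓₓ V[f]‖_{L²(-a,a)} ≤ (1/2) ‖f''‖_{L²(-a,a)}. -/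
/-!
Differentiating under the integral sign twice gives `∂ₓₓV[f](x) = ∫₀¹ σ² f''(σx) dσ`, and
Cauchy–Schwarz on `[0, 1]` bounds its square by `∫₀¹ σ⁴ |f''(σx)|² dσ`. Integrating in `x` and
swapping the integrals, the substitution `t = σx` shows
`∫_{-a}^{a} |f''(σx)|² dx = σ⁻¹ ∫_{-σa}^{σa} |f''|² ≤ σ⁻¹ ‖f''‖²`, so
`‖∂ₓₓV[f]‖² ≤ ‖f''‖² ∫₀¹ σ³ dσ = ‖f''‖² / 4`.
-/

open MeasureTheory Set Metric

variable {E : Type*} [NormedAddCommGroup E] [NormedSpace ℝ E]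

theorem sq_intervalIntegral_le_mul_intervalIntegral_sq {a b : ℝ} (hab : a ≤ b) {g : ℝ → ℝ}
    (hg : IntervalIntegrable g volume a b)
    (hg2 : IntervalIntegrable (fun t => g t ^ 2) volume a b) :
    (∫ t in a..b, g t) ^ 2 ≤ (b - a) * ∫ t in a..b, g t ^ 2 := by
  rcases hab.eq_or_lt with rfl | hlt
  · simp
  have hba : 0 < b - a := sub_pos.2 hlt
  have jensen := (Even.convexOn_pow even_two).map_set_average_le (continuous_pow 2).continuousOn
    isClosed_univ (μ := volume) (t := Ioc a b) (by simp [hlt]) (by simp) (by simp) hg.1 hg2.1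
  simp only [setAverage_eq, measureReal_def, Real.volume_Ioc, ENNReal.toReal_ofReal hba.le,
    smul_eq_mul, ← intervalIntegral.integral_of_le hab] at jensen
  rw [mul_pow, inv_pow, inv_mul_le_iff₀ (by positivity)] at jensen
  calc _ ≤ _ := jensen
    _ = (b - a) * ∫ t in a..b, g t ^ 2 := by field_simp

theorem norm_intervalIntegral_sq_le {a b : ℝ} (hab : a ≤ b) {g : ℝ → E}
    (hg : IntervalIntegrable g volume a b)
    (hg2 : IntervalIntegrable (fun t => ‖g t‖ ^ 2) volume a b) :
    ‖∫ t in a..b, g t‖ ^ 2 ≤ (b - a) * ∫ t in a..b, ‖g t‖ ^ 2 :=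
  (pow_le_pow_left₀ (norm_nonneg _) (intervalIntegral.norm_integral_le_integral_norm hab) 2).trans
    (sq_intervalIntegral_le_mul_intervalIntegral_sq hab hg.norm hg2)

theorem norm_intervalIntegral_sq_smul_comp_mul_sq_le {h : ℝ → E} (hh : Continuous h) (x : ℝ) :
    ‖∫ σ in (0:ℝ)..1, σ ^ 2 • h (σ * x)‖ ^ 2
      ≤ ∫ σ in (0:ℝ)..1, σ ^ 4 * ‖h (σ * x)‖ ^ 2 := by
  have := norm_intervalIntegral_sq_le zero_le_one (g := fun σ : ℝ => σ ^ 2 • h (σ * x))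
    (Continuous.intervalIntegrable (by fun_prop) 0 1)
    (Continuous.intervalIntegrable (by fun_prop) 0 1)
  simpa only [norm_smul, mul_pow, norm_pow, Real.norm_eq_abs, sq_abs, ← pow_mul, sub_zero,
    one_mul] using this

theorem hasDerivAt_intervalIntegral_of_continuous {F F' : ℝ → ℝ → E}
    (hF : Continuous F.uncurry) (hF' : Continuous F'.uncurry)
    (hF_deriv : ∀ y t, HasDerivAt (F · t) (F' y t) y) (a b x₀ : ℝ) :
    HasDerivAt (fun y => ∫ t in a..b, F y t) (∫ t in a..b, F' x₀ t) x₀ := by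
  obtain ⟨C, hC⟩ := ((isCompact_closedBall x₀ 1).prod (isCompact_uIcc (a := a) (b := b)))
    |>.exists_bound_of_continuousOn hF'.continuousOn
  refine (intervalIntegral.hasDerivAt_integral_of_dominated_loc_of_deriv_le (bound := fun _ => C)
    (closedBall_mem_nhds x₀ one_pos) (.of_forall fun y => ?_) ?_ ?_ ?_
    intervalIntegrable_const (.of_forall fun t _ y _ => hF_deriv y t)).2
  · exact (hF.comp (Continuous.prodMk_right y)).aestronglyMeasurable
  · exact (hF.comp (Continuous.prodMk_right x₀)).intervalIntegrable a b
  · exact (hF'.comp (Continuous.prodMk_right x₀)).aestronglyMeasurable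
  · exact .of_forall fun t ht y hy => hC (y, t) ⟨hy, uIoc_subset_uIcc ht⟩

theorem hasDerivAt_intervalIntegral_pow_smul_comp_mul {g g' : ℝ → E}
    (hg : ∀ x, HasDerivAt g (g' x) x) (hg' : Continuous g') (n : ℕ) (a b x₀ : ℝ) :
    HasDerivAt (fun y => ∫ t in a..b, t ^ n • g (t * y))
      (∫ t in a..b, t ^ (n + 1) • g' (t * x₀)) x₀ := by
  have hg_cont : Continuous g := continuous_iff_continuousAt.2 fun x => (hg x).continuousAt
  refine hasDerivAt_intervalIntegral_of_continuous (F' := fun y t => t ^ (n + 1) • g' (t * y))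
    (by fun_prop) (by fun_prop) (fun y t => ?_) a b x₀
  have := ((hg (t * y)).scomp y ((hasDerivAt_id y).const_mul t)).const_smul (t ^ n)
  convert this using 1 <;>
    simp only [mul_one, smul_smul, ← pow_succ, Function.comp_def, Pi.smul_def]

theorem deriv_deriv_intervalIntegral_comp_mul {f : ℝ → ℂ} (hf : ContDiff ℝ 2 f) (x : ℝ) :
    deriv (deriv (fun y => ∫ σ in (0:ℝ)..1, f (σ * y))) x
      = ∫ σ in (0:ℝ)..1, σ ^ 2 • deriv (deriv f) (σ * x) := by
  obtain ⟨hf_diff, -, hf'⟩ := contDiff_succ_iff_deriv.1 (show ContDiff ℝ (1 + 1) f from hf)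
  obtain ⟨hf'_diff, -, hf''⟩ :=
    contDiff_succ_iff_deriv.1 (show ContDiff ℝ (0 + 1) (deriv f) from hf')
  have hV' : deriv (fun y => ∫ σ in (0:ℝ)..1, f (σ * y))
      = fun y => ∫ σ in (0:ℝ)..1, σ ^ 1 • deriv f (σ * y) := by
    ext y
    simpa only [pow_zero, one_smul] using (hasDerivAt_intervalIntegral_pow_smul_comp_mul
      (fun x => (hf_diff x).hasDerivAt) hf'_diff.continuous 0 0 1 y).deriv
  rw [hV']
  exact (hasDerivAt_intervalIntegral_pow_smul_comp_mul (fun x => (hf'_diff x).hasDerivAt)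
    hf''.continuous 1 0 1 x).deriv

theorem intervalIntegral_intervalIntegral_pow_mul_comp_mul_le {g : ℝ → ℝ} (hg : Continuous g)
    (hg_nonneg : ∀ x, 0 ≤ g x) {a b : ℝ} (ha : a ≤ 0) (hb : 0 ≤ b) (n : ℕ) :
    ∫ x in a..b, ∫ σ in (0:ℝ)..1, σ ^ (n + 1) * g (σ * x) ≤ (∫ x in a..b, g x) / (n + 1) := by
  have hI : 0 ≤ ∫ x in a..b, g x :=
    intervalIntegral.integral_nonneg (ha.trans hb) fun x _ => hg_nonneg x
  have hint : IntegrableOn (Function.uncurry fun x σ => σ ^ (n + 1) * g (σ * x))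
      (uIoc a b ×ˢ uIoc 0 1) :=
    ((by fun_prop : Continuous fun p : ℝ × ℝ => p.2 ^ (n + 1) * g (p.2 * p.1)).continuousOn
      |>.integrableOn_compact (isCompact_uIcc.prod isCompact_uIcc)).mono_set
      (prod_mono uIoc_subset_uIcc uIoc_subset_uIcc)
  have inner_le : ∀ σ ∈ Icc (0:ℝ) 1,
      ∫ x in a..b, σ ^ (n + 1) * g (σ * x) ≤ σ ^ n * ∫ x in a..b, g x := by
    rintro σ ⟨hσ0, hσ1⟩
    rcases hσ0.eq_or_lt with rfl | hσ_pos
    · simpa using mul_nonneg (pow_nonneg le_rfl n) hI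
    have shrink : ∫ x in σ * a..σ * b, g x ≤ ∫ x in a..b, g x :=
      intervalIntegral.integral_mono_interval (by nlinarith) (by nlinarith) (by nlinarith)
        (.of_forall fun x => hg_nonneg x) (hg.intervalIntegrable a b)
    calc ∫ x in a..b, σ ^ (n + 1) * g (σ * x)
        = σ ^ n * ∫ x in σ * a..σ * b, g x := by
          rw [intervalIntegral.integral_const_mul,
            intervalIntegral.integral_comp_mul_left g hσ_pos.ne', smul_eq_mul]
          field_simp
          ring
      _ ≤ σ ^ n * ∫ x in a..b, g x := by gcongr
  rw [intervalIntegral_intervalIntegral_swap hint]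
  calc ∫ σ in (0:ℝ)..1, ∫ x in a..b, σ ^ (n + 1) * g (σ * x)
      ≤ ∫ σ in (0:ℝ)..1, σ ^ n * ∫ x in a..b, g x :=
        intervalIntegral.integral_mono_on zero_le_one
          ((intervalIntegral.continuous_parametric_intervalIntegral_of_continuous'
            (by fun_prop) a b).intervalIntegrable 0 1)
          ((continuous_pow n).mul continuous_const |>.intervalIntegrable 0 1) inner_le
    _ = (∫ x in a..b, g x) / (n + 1) := by
        rw [intervalIntegral.integral_mul_const, integral_pow]
        field_simp
        ring

/-- For f ∈ C², ‖∂ₓₓ V[f]‖_{L²(-a,a)} ≤ (1/2) ‖f''‖_{L²(-a,a)}. -/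
theorem stmt_3 (a : ℝ) (ha : 0 < a) (f : ℝ → ℂ) (hf : ContDiff ℝ 2 f) :
    Real.sqrt (∫ x in (-a)..a,
        ‖deriv (deriv (fun y : ℝ => ∫ σ in (0:ℝ)..1, f (σ * y))) x‖ ^ 2)
      ≤ (1 / 2) * Real.sqrt (∫ x in (-a)..a, ‖deriv (deriv f) x‖ ^ 2) := by
  have hf'' : Continuous (deriv (deriv f)) := (hf.iterate_deriv' 0 2).continuous
  simp only [deriv_deriv_intervalIntegral_comp_mul hf]
  calc _ ≤ Real.sqrt
          (∫ x in (-a)..a, ∫ σ in (0:ℝ)..1, σ ^ 4 * ‖deriv (deriv f) (σ * x)‖ ^ 2) :=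
        Real.sqrt_le_sqrt <| intervalIntegral.integral_mono_on (by linarith)
          (Continuous.intervalIntegrable (by fun_prop) _ _)
          (Continuous.intervalIntegrable (by fun_prop) _ _)
          fun x _ => norm_intervalIntegral_sq_smul_comp_mul_sq_le hf'' x
    _ ≤ Real.sqrt ((1 / 2) ^ 2 * ∫ x in (-a)..a, ‖deriv (deriv f) x‖ ^ 2) := by
        refine Real.sqrt_le_sqrt ((intervalIntegral_intervalIntegral_pow_mul_comp_mul_le
          (g := fun x => ‖deriv (deriv f) x‖ ^ 2) (by fun_prop) (fun x => by positivity)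
          (by linarith) ha.le 3).trans_eq ?_)
        norm_num
        ring
    _ = (1 / 2) * Real.sqrt (∫ x in (-a)..a, ‖deriv (deriv f) x‖ ^ 2) := by
        rw [Real.sqrt_mul (by norm_num), Real.sqrt_sq (by norm_num)]
end
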